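/- Let X be a complete CAT(0) metric space, let B be a countable nonempty closed bounded subset of X, and let (B_n) be an increasing sequence of nonempty finite subsets of B whose union is dense in B. Then the circumradii r(B_n) converge to r(B), and the circumcenters c(B_n) converge to c(B). -/

import Mathlib

open Metric Filter

/-- CAT(0) for a metric space, via existence of midpoints satisfying the
CN (Bruhat–Tits) comparison inequality. -/
def IsCAT0 (X : Type*) [MetricSpace X] : Prop :=
  ∀ y z : X, ∃ m : X, dist y m = dist y z / 2 ∧ dist z m = dist y z / 2 ∧
    ∀ x : X, dist x m ^ 2 ≤ dist x y ^ 2 / 2 + dist x z ^ 2 / 2 - dist y z ^ 2 / 4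

/-- The circumradius of a subset. -/
noncomputable def circumradius {X : Type*} [MetricSpace X] (B : Set X) : ℝ :=
  sInf {r : ℝ | 0 ≤ r ∧ ∃ x : X, B ⊆ closedBall x r}

/-- The circumcenter of a subset (well defined for nonempty bounded closed subsets
of a complete CAT(0) space). -/
noncomputable def circumcenter {X : Type*} [MetricSpace X] [Nonempty X] (B : Set X) : X :=
  Classical.epsilon fun x : X => B ⊆ closedBall x (circumradius B)

/-!
If `B` lies in balls of radii `s` and `t` around `y` and `z`, the CN inequality puts `B` in a
ball of radius `√(s²/2 + t²/2 - d(y,z)²/4)` around their midpoint, so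
`d(y,z)² ≤ 2s² + 2t² - 4r(B)²`. Hence centres of almost-minimal balls around an increasing
sequence of sets whose circumradii converge form a Cauchy sequence. For the constant sequence
`B` its limit is the circumcenter; for the `Bₙ` its limit `c` satisfies
`B = closure (⋃ Bₙ) ⊆ closedBall c (lim r(Bₙ))`, and since `r(Bₙ) ≤ r(B)` this forces
`lim r(Bₙ) = r(B)` and `c = c(B)`.
-/

section Circumradius

variable {X : Type*} [MetricSpace X] {A B : Set X}

theorem circumradius_nonneg (B : Set X) : 0 ≤ circumradius B :=
  Real.sInf_nonneg fun _ hr => hr.1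

theorem circumradius_le_of_subset_closedBall {x : X} {r : ℝ} (hr : 0 ≤ r)
    (h : B ⊆ closedBall x r) : circumradius B ≤ r :=
  csInf_le ⟨0, fun _ hs => hs.1⟩ ⟨hr, x, h⟩

theorem nonempty_radii_of_isBounded (hne : B.Nonempty) (hbd : Bornology.IsBounded B) :
    {r : ℝ | 0 ≤ r ∧ ∃ x : X, B ⊆ closedBall x r}.Nonempty := by
  obtain ⟨b, -⟩ := hne
  obtain ⟨r, hr⟩ := hbd.subset_closedBall b
  exact ⟨max r 0, le_max_right _ _, b,
    hr.trans (closedBall_subset_closedBall (le_max_left _ _))⟩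

theorem circumradius_mono (hAB : A ⊆ B) (hne : B.Nonempty) (hbd : Bornology.IsBounded B) :
    circumradius A ≤ circumradius B :=
  csInf_le_csInf ⟨0, fun _ hs => hs.1⟩ (nonempty_radii_of_isBounded hne hbd)
    fun _ ⟨hr, x, hx⟩ => ⟨hr, x, hAB.trans hx⟩

theorem exists_subset_closedBall_circumradius_add (hne : B.Nonempty)
    (hbd : Bornology.IsBounded B) {ε : ℝ} (hε : 0 < ε) :
    ∃ x : X, B ⊆ closedBall x (circumradius B + ε) := by
  obtain ⟨s, ⟨-, x, hx⟩, hs⟩ :=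
    exists_lt_of_csInf_lt (nonempty_radii_of_isBounded hne hbd) (lt_add_of_pos_right _ hε)
  exact ⟨x, hx.trans (closedBall_subset_closedBall hs.le)⟩

theorem circumradius_sq_le_of_forall_dist_sq_le (hne : B.Nonempty) {m : X} {q : ℝ}
    (h : ∀ b ∈ B, dist b m ^ 2 ≤ q) : circumradius B ^ 2 ≤ q := by
  obtain ⟨b₀, hb₀⟩ := hne
  have hq : 0 ≤ q := (sq_nonneg _).trans (h b₀ hb₀)
  have hB : B ⊆ closedBall m √q := fun b hb =>
    (Real.le_sqrt dist_nonneg hq).2 (h b hb)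
  exact (Real.le_sqrt (circumradius_nonneg B) hq).1
    (circumradius_le_of_subset_closedBall (Real.sqrt_nonneg q) hB)

theorem closure_iUnion_subset_closedBall_of_tendsto {A : ℕ → Set X} (hA : Monotone A)
    {x : ℕ → X} {s : ℕ → ℝ} (hx : ∀ n, A n ⊆ closedBall (x n) (s n)) {c : X} {ρ : ℝ}
    (hxc : Tendsto x atTop (nhds c)) (hs : Tendsto s atTop (nhds ρ)) :
    closure (⋃ n, A n) ⊆ closedBall c ρ := by
  refine closure_minimal (Set.iUnion_subset fun n b hb => ?_) isClosed_closedBall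
  have hle : ∀ᶠ m in atTop, dist b (x m) ≤ s m :=
    eventually_atTop.2 ⟨n, fun m hm => hx m (hA hm hb)⟩
  exact le_of_tendsto_of_tendsto (tendsto_const_nhds.dist hxc) hs hle

end Circumradius

section CAT0

variable {X : Type*} [MetricSpace X] {B : Set X}

theorem IsCAT0.dist_sq_le_of_subset_closedBall (hX : IsCAT0 X) (hne : B.Nonempty)
    {y z : X} {s t : ℝ} (hy : B ⊆ closedBall y s) (hz : B ⊆ closedBall z t) :
    dist y z ^ 2 ≤ 2 * s ^ 2 + 2 * t ^ 2 - 4 * circumradius B ^ 2 := by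
  obtain ⟨m, -, -, hm⟩ := hX y z
  have hBm : ∀ b ∈ B, dist b m ^ 2 ≤ s ^ 2 / 2 + t ^ 2 / 2 - dist y z ^ 2 / 4 := by
    intro b hb
    have hby : dist b y ^ 2 ≤ s ^ 2 := pow_le_pow_left₀ dist_nonneg (hy hb) 2
    have hbz : dist b z ^ 2 ≤ t ^ 2 := pow_le_pow_left₀ dist_nonneg (hz hb) 2
    linarith [hm b]
  linarith [circumradius_sq_le_of_forall_dist_sq_le hne hBm]

theorem IsCAT0.cauchySeq_of_subset_closedBall (hX : IsCAT0 X) {A : ℕ → Set X}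
    (hA : Monotone A) (hne : ∀ n, (A n).Nonempty) {x : ℕ → X} {s : ℕ → ℝ}
    (hx : ∀ n, A n ⊆ closedBall (x n) (s n)) {ρ : ℝ} (hs : Tendsto s atTop (nhds ρ))
    (hr : Tendsto (fun n => circumradius (A n)) atTop (nhds ρ)) : CauchySeq x := by
  rw [cauchySeq_iff_tendsto_dist_atTop_0, ← prod_atTop_atTop_eq]
  have hmin : Tendsto (fun p : ℕ × ℕ => min p.1 p.2) (atTop ×ˢ atTop) atTop :=
    tendsto_inf_atTop _ tendsto_fst tendsto_snd
  have hbound : Tendsto (fun p : ℕ × ℕ =>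
      2 * s p.1 ^ 2 + 2 * s p.2 ^ 2 - 4 * circumradius (A (min p.1 p.2)) ^ 2)
      (atTop ×ˢ atTop) (nhds 0) := by
    have h := (((hs.comp tendsto_fst).pow 2).const_mul 2).add
      (((hs.comp tendsto_snd).pow 2).const_mul 2) |>.sub (((hr.comp hmin).pow 2).const_mul 4)
    rw [show (2 * ρ ^ 2 + 2 * ρ ^ 2 - 4 * ρ ^ 2 : ℝ) = 0 by ring] at h
    exact h
  have hsq := squeeze_zero (fun p : ℕ × ℕ => sq_nonneg (dist (x p.1) (x p.2)))
    (fun p => hX.dist_sq_le_of_subset_closedBall (hne _)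
      ((hA (min_le_left p.1 p.2)).trans (hx p.1))
      ((hA (min_le_right p.1 p.2)).trans (hx p.2)))
    hbound
  simpa only [Real.sqrt_sq dist_nonneg, Real.sqrt_zero] using hsq.sqrt

theorem IsCAT0.exists_subset_closedBall_circumradius [CompleteSpace X] (hX : IsCAT0 X)
    (hne : B.Nonempty) (hbd : Bornology.IsBounded B) :
    ∃ c : X, B ⊆ closedBall c (circumradius B) := by
  choose x hx using fun k : ℕ =>
    exists_subset_closedBall_circumradius_add hne hbd
      (Nat.one_div_pos_of_nat : (0 : ℝ) < 1 / ((k : ℝ) + 1))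
  have hs : Tendsto (fun k : ℕ => circumradius B + 1 / ((k : ℝ) + 1)) atTop
      (nhds (circumradius B)) := by
    simpa using
      (tendsto_const_nhds (x := circumradius B)).add tendsto_one_div_add_atTop_nhds_zero_nat
  obtain ⟨c, hc⟩ := cauchySeq_tendsto_of_complete
    (hX.cauchySeq_of_subset_closedBall monotone_const (fun _ => hne) hx hs tendsto_const_nhds)
  exact ⟨c, (Set.subset_iUnion (fun _ : ℕ => B) 0).trans <| subset_closure.trans <|
    closure_iUnion_subset_closedBall_of_tendsto monotone_const hx hc hs⟩

theorem IsCAT0.subset_closedBall_circumcenter [Nonempty X] [CompleteSpace X]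
    (hX : IsCAT0 X) (hne : B.Nonempty) (hbd : Bornology.IsBounded B) :
    B ⊆ closedBall (circumcenter B) (circumradius B) :=
  Classical.epsilon_spec (hX.exists_subset_closedBall_circumradius hne hbd)

theorem IsCAT0.circumcenter_eq_of_subset_closedBall [Nonempty X] (hX : IsCAT0 X)
    (hne : B.Nonempty) {c : X} (hc : B ⊆ closedBall c (circumradius B)) :
    circumcenter B = c := by
  have hcB : B ⊆ closedBall (circumcenter B) (circumradius B) :=
    Classical.epsilon_spec (p := fun x => B ⊆ closedBall x (circumradius B)) ⟨c, hc⟩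
  have h := hX.dist_sq_le_of_subset_closedBall hne hcB hc
  have hsq : dist (circumcenter B) c ^ 2 = 0 := le_antisymm (by linarith) (sq_nonneg _)
  exact dist_eq_zero.1 (pow_eq_zero_iff two_ne_zero |>.1 hsq)

end CAT0

theorem stmt1_general {X : Type*} [MetricSpace X] [CompleteSpace X] [Nonempty X]
    (hX : IsCAT0 X)
    (B : Set X) (hBne : B.Nonempty)
    (hBbd : Bornology.IsBounded B)
    (Bn : ℕ → Set X) (hne : ∀ n, (Bn n).Nonempty)
    (hsub : ∀ n, Bn n ⊆ B) (hmono : Monotone Bn)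
    (hdense : B = closure (⋃ n, Bn n)) :
    Tendsto (fun n => circumradius (Bn n)) atTop (nhds (circumradius B)) ∧
      Tendsto (fun n => circumcenter (Bn n)) atTop (nhds (circumcenter B)) := by
  have hbd : ∀ n, Bornology.IsBounded (Bn n) := fun n => hBbd.subset (hsub n)
  have hle : ∀ n, circumradius (Bn n) ≤ circumradius B := fun n =>
    circumradius_mono (hsub n) hBne hBbd
  obtain ⟨ρ, hρ⟩ : ∃ ρ, Tendsto (fun n => circumradius (Bn n)) atTop (nhds ρ) :=
    ⟨_, tendsto_atTop_ciSup (fun m n hmn => circumradius_mono (hmono hmn) (hne n) (hbd n))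
      ⟨_, Set.forall_mem_range.2 hle⟩⟩
  have hcov : ∀ n, Bn n ⊆ closedBall (circumcenter (Bn n)) (circumradius (Bn n)) := fun n =>
    hX.subset_closedBall_circumcenter (hne n) (hbd n)
  obtain ⟨c, hc⟩ := cauchySeq_tendsto_of_complete
    (hX.cauchySeq_of_subset_closedBall hmono hne hcov hρ hρ)
  have hBc : B ⊆ closedBall c ρ :=
    hdense ▸ closure_iUnion_subset_closedBall_of_tendsto hmono hcov hc hρ
  have hρB : circumradius B = ρ := le_antisymm
    (circumradius_le_of_subset_closedBall (ge_of_tendsto' hρ fun n => circumradius_nonneg _) hBc)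
    (le_of_tendsto' hρ hle)
  rw [← hρB] at hρ hBc
  exact ⟨hρ, hX.circumcenter_eq_of_subset_closedBall hBne hBc ▸ hc⟩

/-- Lemma 2.2: circumradii and circumcenters of an exhausting increasing sequence of
finite subsets converge to those of the countable closed bounded set. -/
theorem stmt1 {X : Type*} [MetricSpace X] [CompleteSpace X] [Nonempty X]
    (hX : IsCAT0 X)
    (B : Set X) (hBcount : B.Countable) (hBne : B.Nonempty) (hBcl : IsClosed B)
    (hBbd : Bornology.IsBounded B)
    (Bn : ℕ → Set X) (hfin : ∀ n, (Bn n).Finite) (hne : ∀ n, (Bn n).Nonempty)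
    (hsub : ∀ n, Bn n ⊆ B) (hmono : Monotone Bn)
    (hdense : B = closure (⋃ n, Bn n)) :
    Tendsto (fun n => circumradius (Bn n)) atTop (nhds (circumradius B)) ∧
      Tendsto (fun n => circumcenter (Bn n)) atTop (nhds (circumcenter B)) :=
  stmt1_general hX B hBne hBbd Bn hne hsub hmono hdense
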